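/- arXiv:2209.07649 — 4 statements merged into one kernel-verified Lean document; each statement's English description precedes it below -/
import Mathlib

section
/- For a complex number z with |z| < 1 and a complex number β with Re(β) > 0, one has β · ∫_0^1 t^{β−1}/(1 − z·t) dt = ∑_{k=0}^∞ (β/(β+k)) · z^k. -/
/-!
Expand `1 / (1 - z t)` as a geometric series; term `k` integrates to `z ^ k / (β + k)`.
Termwise integration is justified because the integrals of the norms, `‖z‖ ^ k / (Re β + k)`,
are dominated by the convergent series `∑ ‖z‖ ^ k / Re β`.
-/

open Complex intervalIntegral MeasureTheory Set

namespace Complex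

variable {s : ℂ}

lemma integrableOn_cpow_sub_one (hs : 0 < s.re) :
    IntegrableOn (fun t : ℝ ↦ (t : ℂ) ^ (s - 1)) (Ioc 0 1) := by
  rw [← intervalIntegrable_iff_integrableOn_Ioc_of_le zero_le_one]
  exact intervalIntegrable_cpow' (by simpa using hs)

lemma setIntegral_cpow_sub_one (hs : 0 < s.re) :
    ∫ t in Ioc (0 : ℝ) 1, (t : ℂ) ^ (s - 1) = 1 / s := by
  have hs0 : s ≠ 0 := fun h ↦ by simp [h] at hs
  rw [← integral_of_le zero_le_one, integral_cpow (Or.inl (by simpa using hs)), sub_add_cancel]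
  simp [zero_cpow hs0]

lemma setIntegral_norm_cpow_sub_one (hs : 0 < s.re) :
    ∫ t in Ioc (0 : ℝ) 1, ‖(t : ℂ) ^ (s - 1)‖ = 1 / s.re := by
  rw [setIntegral_congr_fun measurableSet_Ioc fun t ht ↦ norm_cpow_eq_rpow_re_of_pos ht.1 _,
    ← integral_of_le zero_le_one, integral_rpow (Or.inl (by simpa using hs))]
  simp [Real.zero_rpow (by simpa using hs.ne')]

lemma hasSum_cpow_mul_geometric {z : ℂ} {t : ℝ} (ht : 0 < t) (hzt : ‖z * t‖ < 1) :
    HasSum (fun k : ℕ ↦ z ^ k * (t : ℂ) ^ (s + k - 1)) ((t : ℂ) ^ (s - 1) / (1 - z * t)) := by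
  have h_term (k : ℕ) : z ^ k * (t : ℂ) ^ (s + k - 1) = (t : ℂ) ^ (s - 1) * (z * t) ^ k := by
    rw [add_sub_right_comm, cpow_add _ _ (ofReal_ne_zero.mpr ht.ne'), cpow_natCast]
    ring
  simpa only [h_term, div_eq_mul_inv] using
    (hasSum_geometric_of_norm_lt_one hzt).mul_left ((t : ℂ) ^ (s - 1))

theorem hasSum_integral_cpow_sub_one_div_one_sub_mul {z : ℂ} (hs : 0 < s.re) (hz : ‖z‖ < 1) :
    HasSum (fun k : ℕ ↦ z ^ k / (s + k))
      (∫ t in (0 : ℝ)..1, (t : ℂ) ^ (s - 1) / (1 - z * t)) := by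
  set F : ℕ → ℝ → ℂ := fun k t ↦ z ^ k * (t : ℂ) ^ (s + k - 1)
  have hsk (k : ℕ) : 0 < (s + k).re := by simpa using add_pos_of_pos_of_nonneg hs k.cast_nonneg
  have hF_int (k : ℕ) : IntegrableOn (F k) (Ioc 0 1) :=
    (integrableOn_cpow_sub_one (hsk k)).const_mul _
  have hF_norm (k : ℕ) : ∫ t in Ioc (0 : ℝ) 1, ‖F k t‖ = ‖z‖ ^ k / (s.re + k) := by
    simp only [F, norm_mul, norm_pow, MeasureTheory.integral_const_mul,
      setIntegral_norm_cpow_sub_one (hsk k), add_re, natCast_re, mul_one_div]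
  have hF_sum : Summable fun k ↦ ∫ t in Ioc (0 : ℝ) 1, ‖F k t‖ := by
    simp_rw [hF_norm]
    refine ((summable_geometric_of_lt_one (norm_nonneg z) hz).div_const s.re).of_nonneg_of_le
      (fun k ↦ by positivity) fun k ↦ ?_
    gcongr
    exact le_add_of_nonneg_right k.cast_nonneg
  have hF_eval (k : ℕ) : ∫ t in Ioc (0 : ℝ) 1, F k t = z ^ k / (s + k) := by
    simp only [F, MeasureTheory.integral_const_mul, setIntegral_cpow_sub_one (hsk k), mul_one_div]
  have h_tsum : ∫ t in (0 : ℝ)..1, (t : ℂ) ^ (s - 1) / (1 - z * t) =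
      ∫ t in Ioc (0 : ℝ) 1, ∑' k, F k t := by
    rw [integral_of_le zero_le_one]
    refine setIntegral_congr_fun measurableSet_Ioc fun t ⟨ht0, ht1⟩ ↦ ?_
    refine ((hasSum_cpow_mul_geometric ht0 ?_).tsum_eq).symm
    rw [norm_mul, norm_real, Real.norm_of_nonneg ht0.le]
    exact (mul_le_of_le_one_right (norm_nonneg z) ht1).trans_lt hz
  simpa only [hF_eval, ← h_tsum] using hasSum_integral_of_summable_integral_norm hF_int hF_sum

end Complex

theorem stmt_2 (z β : ℂ) (hz : ‖z‖ < 1) (hβ : 0 < β.re) :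
    β * ∫ t in (0:ℝ)..1, Complex.exp ((β - 1) * Real.log t) / (1 - z * t) =
    ∑' k : ℕ, (β / (β + k)) * z ^ k := by
  have hexp : EqOn (fun t : ℝ ↦ exp ((β - 1) * Real.log t) / (1 - z * t))
      (fun t : ℝ ↦ (t : ℂ) ^ (β - 1) / (1 - z * t)) (Ioo 0 1) := fun t ht ↦ by
    simp only [cpow_def_of_ne_zero (ofReal_ne_zero.mpr ht.1.ne'), ← ofReal_log ht.1.le, mul_comm]
  rw [integral_congr_Ioo_of_le zero_le_one hexp,
    (hasSum_integral_cpow_sub_one_div_one_sub_mul hβ hz).tsum_eq.symm, ← tsum_mul_left]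
  congr 1 with k
  ring
end

section
/- Let β ∈ ℂ with β ∉ ℤ_{≤0}, θ ∈ (0, 2π), and α ∈ ℂ with |α| > 1. Then ∫_θ^{θ+2π} (e^{iβt}/(e^{it} − α))·i·e^{it} dt = e^{iβθ}(e^{2πiβ} − 1)·(1/β)·(1 − ∑_{k=0}^∞ (β/(β+k))·(α^{−1}e^{iθ})^k). -/
/-!
As `‖e^{it} / α‖ < 1`, the Cauchy kernel `1 / (e^{it} - α)` is a geometric series in `e^{it} / α`,
so the integrand is a series of exponentials `e^{i(β+k+1)t}`. Over an interval of length `2π`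
each of them integrates to `e^{i(β+k+1)θ} (e^{2πiβ} - 1) / (i(β+k+1))`, since `e^{2πi(k+1)} = 1`.
Dominated convergence allows integrating term by term, and shifting the index by one turns the
result into `1 - ∑ β/(β+k) w^k` with `w = e^{iθ} / α`.
-/

open Complex intervalIntegral

lemma hasSum_inv_sub_geometric {z α : ℂ} (h : ‖z‖ < ‖α‖) :
    HasSum (fun k : ℕ => -(z ^ k / α ^ (k + 1))) (z - α)⁻¹ := by
  have hα : α ≠ 0 := norm_pos_iff.mp ((norm_nonneg z).trans_lt h)
  have hq : ‖z / α‖ < 1 := by rwa [norm_div, div_lt_one (norm_pos_iff.mpr hα)]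
  have hgeom := (hasSum_geometric_of_norm_lt_one hq).mul_left (-α⁻¹)
  have hαz : α - z ≠ 0 := fun h' => (sub_eq_zero.mp h' ▸ h).false
  rw [show -α⁻¹ * (1 - z / α)⁻¹ = (z - α)⁻¹ by rw [← neg_sub α z]; field_simp] at hgeom
  exact hgeom.congr_fun fun k => by rw [div_pow, pow_succ]; field_simp

lemma exp_I_mul_add_nat_mul (β : ℂ) (n : ℕ) (t : ℝ) :
    exp (I * (β + n) * t) = exp (I * β * t) * exp (I * t) ^ n := by
  rw [← exp_nat_mul, ← exp_add]; ring_nf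

lemma hasSum_exp_div_exp_sub (β : ℂ) {α : ℂ} (hα : 1 < ‖α‖) (t : ℝ) :
    HasSum (fun k : ℕ => -I * α⁻¹ ^ (k + 1) * exp (I * (β + (k + 1 : ℕ)) * t))
      (exp (I * β * t) / (exp (I * t) - α) * I * exp (I * t)) := by
  have hz : ‖exp (I * t)‖ < ‖α‖ := by rwa [norm_exp_I_mul_ofReal]
  have hgeom := (hasSum_inv_sub_geometric hz).mul_left (I * exp (I * β * t) * exp (I * t))
  rw [show I * exp (I * β * t) * exp (I * t) * (exp (I * t) - α)⁻¹
      = exp (I * β * t) / (exp (I * t) - α) * I * exp (I * t) by ring] at hgeom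
  exact hgeom.congr_fun fun k => by rw [exp_I_mul_add_nat_mul, pow_succ]; ring

lemma norm_neg_I_mul_inv_pow_mul_exp (β α : ℂ) (k : ℕ) (t : ℝ) :
    ‖-I * α⁻¹ ^ (k + 1) * exp (I * (β + (k + 1 : ℕ)) * t)‖ =
      ‖α‖⁻¹ ^ (k + 1) * Real.exp (-β.im * t) := by
  simp [norm_exp]

lemma integral_exp_I_mul_add_nat (β : ℂ) (n : ℕ) (hn : β + n ≠ 0) (θ : ℝ) :
    ∫ t in θ..(θ + 2 * Real.pi), exp (I * (β + n) * t) =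
      exp (I * β * θ) * (exp (2 * Real.pi * I * β) - 1) * exp (I * θ) ^ n / (I * (β + n)) := by
  rw [integral_exp_mul_complex (mul_ne_zero I_ne_zero hn)]
  congr 1
  rw [show I * (β + n) * ((θ + 2 * Real.pi : ℝ) : ℂ)
      = I * (β + n) * θ + (2 * Real.pi * I * β + n * (2 * Real.pi * I)) by push_cast; ring,
    exp_add, exp_add, exp_nat_mul_two_pi_mul_I, exp_I_mul_add_nat_mul]
  ring

lemma hasSum_intervalIntegral_exp_div_exp_sub (β : ℂ) {α : ℂ} (hα : 1 < ‖α‖) (a b : ℝ) :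
    HasSum (fun k : ℕ => ∫ t in a..b, -I * α⁻¹ ^ (k + 1) * exp (I * (β + (k + 1 : ℕ)) * t))
      (∫ t in a..b, exp (I * β * t) / (exp (I * t) - α) * I * exp (I * t)) := by
  have hr : ‖α‖⁻¹ < 1 := inv_lt_one_of_one_lt₀ hα
  have hgeom : Summable fun k : ℕ => ‖α‖⁻¹ ^ (k + 1) :=
    (summable_nat_add_iff 1).mpr (summable_geometric_of_lt_one (by positivity) hr)
  refine hasSum_integral_of_dominated_convergence
    (fun k t => ‖α‖⁻¹ ^ (k + 1) * Real.exp (-β.im * t))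
    (fun k => (by fun_prop : Continuous _).aestronglyMeasurable)
    (fun k => .of_forall fun t _ => (norm_neg_I_mul_inv_pow_mul_exp β α k t).le)
    (.of_forall fun t _ => hgeom.mul_right _) ?_
    (.of_forall fun t _ => hasSum_exp_div_exp_sub β hα t)
  simp_rw [tsum_mul_right]
  exact (by fun_prop : Continuous _).intervalIntegrable a b

lemma integral_neg_I_mul_inv_pow_mul_exp (β α : ℂ) (k : ℕ) (hk : β + (k + 1 : ℕ) ≠ 0) (θ : ℝ) :
    ∫ t in θ..(θ + 2 * Real.pi), -I * α⁻¹ ^ (k + 1) * exp (I * (β + (k + 1 : ℕ)) * t) =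
      -(exp (I * β * θ) * (exp (2 * Real.pi * I * β) - 1) *
        ((α⁻¹ * exp (I * θ)) ^ (k + 1) / (β + (k + 1 : ℕ)))) := by
  rw [integral_const_mul, integral_exp_I_mul_add_nat β _ hk, mul_pow]
  field_simp

lemma summable_div_add_nat_mul_pow (β : ℂ) {w : ℂ} (hw : ‖w‖ < 1) :
    Summable fun k : ℕ => β / (β + k) * w ^ k := by
  refine .of_norm_bounded_eventually_nat (summable_geometric_of_lt_one (norm_nonneg w) hw) ?_
  filter_upwards [Filter.eventually_ge_atTop ⌈2 * ‖β‖⌉₊] with k hk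
  have hk' : 2 * ‖β‖ ≤ k := Nat.ceil_le.mp hk
  have hβk : ‖β‖ ≤ ‖β + k‖ := by
    have := norm_sub_norm_le (k : ℂ) (-β)
    rw [sub_neg_eq_add, add_comm, norm_neg, Complex.norm_natCast] at this
    linarith
  rw [norm_mul, norm_div, norm_pow]
  exact mul_le_of_le_one_left (by positivity) (div_le_one_of_le₀ hβk (norm_nonneg _))

lemma one_sub_tsum_div_add_nat_mul_pow {β : ℂ} (hβ : β ≠ 0) {w : ℂ} (hw : ‖w‖ < 1) :
    1 / β * (1 - ∑' k : ℕ, β / (β + k) * w ^ k) =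
      -∑' k : ℕ, w ^ (k + 1) / (β + (k + 1 : ℕ)) := by
  rw [(summable_div_add_nat_mul_pow β hw).tsum_eq_zero_add, Nat.cast_zero, add_zero, pow_zero,
    div_self hβ, one_mul, sub_add_cancel_left, mul_neg, ← tsum_mul_left]
  congr 2 with k
  field_simp

theorem stmt_6_general (β : ℂ) (hβ : ∀ n : ℤ, n ≤ 0 → β ≠ n) (θ : ℝ)
    (α : ℂ) (hα : 1 < ‖α‖) :
    ∫ t in θ..(θ + 2 * Real.pi),
        (Complex.exp (Complex.I * β * t) / (Complex.exp (Complex.I * t) - α)) *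
          Complex.I * Complex.exp (Complex.I * t) =
    Complex.exp (Complex.I * β * θ) * (Complex.exp (2 * Real.pi * Complex.I * β) - 1) * (1 / β) *
      (1 - ∑' k : ℕ, (β / (β + k)) * (α⁻¹ * Complex.exp (Complex.I * θ)) ^ k) := by
  have hβ0 : β ≠ 0 := by simpa using hβ 0 le_rfl
  have hβk (k : ℕ) : β + (k + 1 : ℕ) ≠ 0 := fun h =>
    hβ (-(k + 1 : ℕ)) (by omega) (by push_cast at h ⊢; linear_combination h)
  have hw : ‖α⁻¹ * exp (I * θ)‖ < 1 := by
    rw [norm_mul, norm_exp_I_mul_ofReal, mul_one, norm_inv]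
    exact inv_lt_one_of_one_lt₀ hα
  rw [← (hasSum_intervalIntegral_exp_div_exp_sub β hα _ _).tsum_eq, mul_assoc,
    one_sub_tsum_div_add_nat_mul_pow hβ0 hw, mul_neg, ← tsum_mul_left, ← tsum_neg]
  exact tsum_congr fun k => integral_neg_I_mul_inv_pow_mul_exp β α k (hβk k) θ

theorem stmt_6 (β : ℂ) (hβ : ∀ n : ℤ, n ≤ 0 → β ≠ n) (θ : ℝ) (hθ : θ ∈ Set.Ioo 0 (2 * Real.pi))
    (α : ℂ) (hα : 1 < ‖α‖) :
    ∫ t in θ..(θ + 2 * Real.pi),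
        (Complex.exp (Complex.I * β * t) / (Complex.exp (Complex.I * t) - α)) *
          Complex.I * Complex.exp (Complex.I * t) =
    Complex.exp (Complex.I * β * θ) * (Complex.exp (2 * Real.pi * Complex.I * β) - 1) * (1 / β) *
      (1 - ∑' k : ℕ, (β / (β + k)) * (α⁻¹ * Complex.exp (Complex.I * θ)) ^ k) :=
  stmt_6_general β hβ θ α hα
end

section
/- Let β be a negative integer, θ ∈ (0, 2π), and α ∈ ℂ with |α| > 1. Then ∫_θ^{θ+2π} (e^{iβt}/(e^{it} − α))·i·e^{it} dt = −2πi·α^{β}. -/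
/-! On a circle `C(c, R)` with `w` outside the closed disc,
`(z - c)^(m-1) / (z - w) = ((z - c)^m / (z - w) - (z - c)^(m-1)) / (w - c)`.
Since `∮ (z - w)⁻¹ = 0` and `∮ (z - c)^k = 2πi` or `0` according as `k = -1` or not, downward
induction from `m = 0` gives `∮ (z - c)^m / (z - w) = -2πi (w - c)^m` for every `m < 0`.
The integral of the theorem is the case `c = 0`, `R = 1`, `w = α`, parametrised over a shifted
period. -/

open Complex intervalIntegral Metric Real

namespace circleIntegral

variable {c w : ℂ} {R : ℝ}

theorem integral_eq_intervalIntegral_add_two_pi {E : Type*} [NormedAddCommGroup E]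
    [NormedSpace ℂ E] (f : ℂ → E) (c : ℂ) (R θ : ℝ) :
    (∮ z in C(c, R), f z) =
      ∫ t in θ..θ + 2 * π, deriv (circleMap c R) t • f (circleMap c R t) := by
  have hper : Function.Periodic (fun t => deriv (circleMap c R) t • f (circleMap c R t)) (2 * π) :=
    fun t => by simp only [deriv_circleMap, periodic_circleMap _ _ t]
  rw [hper.intervalIntegral_add_eq θ 0, zero_add, circleIntegral]

theorem sub_center_ne_zero_of_notMem_closedBall (hR : 0 ≤ R) (hw : w ∉ closedBall c R) :
    w - c ≠ 0 :=
  sub_ne_zero.2 fun h => hw (h ▸ mem_closedBall_self hR)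

theorem integral_sub_inv_of_notMem_closedBall (hR : 0 ≤ R) (hw : w ∉ closedBall c R) :
    (∮ z in C(c, R), (z - w)⁻¹) = 0 := by
  refine DiffContOnCl.circleIntegral_eq_zero hR (DifferentiableOn.diffContOnCl ?_)
  exact (differentiableOn_id.sub_const w).inv fun z hz =>
    sub_ne_zero.2 (ne_of_mem_of_not_mem (closure_ball_subset_closedBall hz) hw)

theorem circleIntegrable_sub_zpow_div_sub (hR : 0 < R) (hw : w ∉ closedBall c R) (m : ℤ) :
    CircleIntegrable (fun z => (z - c) ^ m / (z - w)) c R := by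
  refine ContinuousOn.circleIntegrable hR.le fun z hz => ContinuousAt.continuousWithinAt ?_
  have hzc : z - c ≠ 0 := sub_ne_zero.2 (ne_of_mem_sphere hz hR.ne')
  have hzw : z - w ≠ 0 := sub_ne_zero.2 (ne_of_mem_of_not_mem (sphere_subset_closedBall hz) hw)
  exact ((continuousAt_id.sub continuousAt_const).zpow₀ m (Or.inl hzc)).div
    (continuousAt_id.sub continuousAt_const) hzw

theorem integral_sub_zpow_sub_one_div_sub (hR : 0 < R) (hw : w ∉ closedBall c R) (m : ℤ) :
    (∮ z in C(c, R), (z - c) ^ (m - 1) / (z - w)) =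
      (w - c)⁻¹ * ((∮ z in C(c, R), (z - c) ^ m / (z - w)) - ∮ z in C(c, R), (z - c) ^ (m - 1)) := by
  have hwc := sub_center_ne_zero_of_notMem_closedBall hR.le hw
  rw [← circleIntegral.integral_sub (circleIntegrable_sub_zpow_div_sub hR hw m)
    (circleIntegrable_sub_zpow_iff.2 (Or.inr (Or.inr (by simp [(abs_pos.2 hR.ne').ne])))),
    ← circleIntegral.integral_const_mul]
  refine circleIntegral.integral_congr hR.le fun z hz => ?_
  have hzc : z - c ≠ 0 := sub_ne_zero.2 (ne_of_mem_sphere hz hR.ne')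
  have hzw : z - w ≠ 0 := sub_ne_zero.2 (ne_of_mem_of_not_mem (sphere_subset_closedBall hz) hw)
  rw [zpow_sub_one₀ hzc]
  field_simp
  ring

theorem integral_sub_zpow_div_sub_of_neg (hR : 0 < R) (hw : w ∉ closedBall c R) {m : ℤ}
    (hm : m < 0) : (∮ z in C(c, R), (z - c) ^ m / (z - w)) = -(2 * π * I) * (w - c) ^ m := by
  induction m, Int.le_sub_one_of_lt hm using Int.leInductionDown with
  | base =>
    rw [integral_sub_zpow_sub_one_div_sub hR hw 0, zero_sub, zpow_neg_one]
    simp only [zpow_zero, one_div, zpow_neg_one]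
    rw [integral_sub_inv_of_notMem_closedBall hR.le hw, integral_sub_center_inv c hR.ne']
    ring
  | pred n hn ih =>
    rw [integral_sub_zpow_sub_one_div_sub hR hw, ih (by omega), integral_sub_zpow_of_ne (by omega),
      zpow_sub_one₀ (sub_center_ne_zero_of_notMem_closedBall hR.le hw)]
    ring

end circleIntegral

theorem stmt_7_general (β : ℤ) (hβ : β < 0) (θ : ℝ)
    (α : ℂ) (hα : 1 < ‖α‖) :
    ∫ t in θ..(θ + 2 * Real.pi),
        (Complex.exp (Complex.I * β * t) / (Complex.exp (Complex.I * t) - α)) *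
          Complex.I * Complex.exp (Complex.I * t) =
    -(2 * Real.pi * Complex.I) * α ^ β := by
  have hα' : α ∉ closedBall (0 : ℂ) 1 := by simpa using hα
  have hcircle := circleIntegral.integral_sub_zpow_div_sub_of_neg one_pos hα' hβ
  simp only [sub_zero] at hcircle
  rw [circleIntegral.integral_eq_intervalIntegral_add_two_pi _ _ _ θ] at hcircle
  rw [← hcircle]
  refine intervalIntegral.integral_congr fun t _ => ?_
  rw [deriv_circleMap, circleMap_zero, ofReal_one, one_mul, ← Complex.exp_int_mul, smul_eq_mul]
  ring_nf

theorem stmt_7 (β : ℤ) (hβ : β < 0) (θ : ℝ) (hθ : θ ∈ Set.Ioo 0 (2 * Real.pi))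
    (α : ℂ) (hα : 1 < ‖α‖) :
    ∫ t in θ..(θ + 2 * Real.pi),
        (Complex.exp (Complex.I * β * t) / (Complex.exp (Complex.I * t) - α)) *
          Complex.I * Complex.exp (Complex.I * t) =
    -(2 * Real.pi * Complex.I) * α ^ β :=
  stmt_7_general β hβ θ α hα
end

section
/- Let α ∈ ℂ with |α| < 1, β ∈ ℂ with β ∉ ℤ_{≥0}, and θ ∈ (0, 2π). Then ∫_θ^{θ+2π} (e^{iβt}/(e^{it} − α))·i·e^{it} dt = e^{iβθ}(e^{2πiβ} − 1)·∑_{k=0}^∞ (α^k/(β − k))·e^{−ikθ}. -/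
open Complex intervalIntegral

/-!
Expanding `1 / (e^{it} - α) = e^{-it} / (1 - α e^{-it})` as a geometric series turns the
integrand into `∑ₙ i αⁿ e^{i(β - n)t}`, and the series may be integrated termwise since it is
dominated by `∑ₙ ‖α‖ⁿ e^{-t Im β}`. Over a full period each term integrates to
`αⁿ e^{i(β - n)θ} (e^{2πiβ} - 1) / (β - n)`, because `e^{-2πin} = 1`.
-/

section

variable {α : ℂ} (β : ℂ)

theorem hasSum_pow_mul_exp_mul_I (hα : ‖α‖ < 1) (t : ℝ) :
    HasSum (fun n : ℕ => α ^ n * exp (I * (β - n) * t) * I)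
      (exp (I * β * t) / (exp (I * t) - α) * I * exp (I * t)) := by
  set q := α * exp (-(I * t))
  have hq : ‖q‖ < 1 := by simpa [q, norm_exp] using hα
  have hterm : ∀ n : ℕ, α ^ n * exp (I * (β - n) * t) * I = exp (I * β * t) * q ^ n * I := by
    intro n
    rw [mul_pow, ← exp_nat_mul, mul_sub, sub_mul, sub_eq_add_neg, exp_add]
    ring_nf
  have hsum : exp (I * t) - α = (1 - q) * exp (I * t) := by
    rw [sub_mul, one_mul, mul_assoc, ← exp_add, neg_add_cancel, exp_zero, mul_one]
  have hlim : exp (I * β * t) / (exp (I * t) - α) * I * exp (I * t) =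
      exp (I * β * t) * (1 - q)⁻¹ * I := by
    rw [hsum]
    field_simp [exp_ne_zero]
  simp_rw [hterm, hlim]
  exact ((hasSum_geometric_of_norm_lt_one hq).mul_left _).mul_right I

theorem norm_pow_mul_exp_mul_I (n : ℕ) (t : ℝ) :
    ‖α ^ n * exp (I * (β - n) * t) * I‖ = ‖α‖ ^ n * Real.exp (-β.im * t) := by
  simp [norm_exp, mul_re, mul_im]

theorem hasSum_integral_pow_mul_exp_mul_I (hα : ‖α‖ < 1) (a b : ℝ) :
    HasSum (fun n : ℕ => ∫ t in a..b, α ^ n * exp (I * (β - n) * t) * I)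
      (∫ t in a..b, exp (I * β * t) / (exp (I * t) - α) * I * exp (I * t)) := by
  have hgeom := summable_geometric_of_lt_one (norm_nonneg α) hα
  refine hasSum_integral_of_dominated_convergence
    (fun n t => ‖α‖ ^ n * Real.exp (-β.im * t)) (fun n => ?_)
    (fun n => .of_forall fun t _ => (norm_pow_mul_exp_mul_I β n t).le)
    (.of_forall fun t _ => hgeom.mul_right _) ?_
    (.of_forall fun t _ => hasSum_pow_mul_exp_mul_I β hα t)
  · exact Continuous.aestronglyMeasurable (by fun_prop)
  · simp_rw [tsum_mul_right]
    exact (continuous_const.mul (by fun_prop)).intervalIntegrable _ _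

theorem integral_pow_mul_exp_mul_I_period {n : ℕ} (hβ : β ≠ n) (θ : ℝ) :
    ∫ t in θ..(θ + 2 * Real.pi), α ^ n * exp (I * (β - n) * t) * I =
      exp (I * β * θ) * (exp (2 * Real.pi * I * β) - 1) *
        (α ^ n / (β - n) * exp (-I * n * θ)) := by
  have hperiod : exp (-(n : ℂ) * (2 * Real.pi * I)) = 1 := by
    simpa using exp_int_mul_two_pi_mul_I (-n)
  simp_rw [mul_comm _ I, ← mul_assoc, integral_const_mul, integral_exp_mul_complex
    (mul_ne_zero I_ne_zero (sub_ne_zero.2 hβ))]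
  have hend : exp (I * (β - n) * ↑(θ + 2 * Real.pi)) =
      exp (I * (β - n) * θ) * exp (2 * Real.pi * I * β) := by
    rw [← mul_one (exp (2 * Real.pi * I * β)), ← hperiod, ← exp_add, ← exp_add]
    push_cast
    ring_nf
  have hstart : exp (I * (β - n) * θ) = exp (I * β * θ) * exp (-I * n * θ) := by
    rw [← exp_add]
    ring_nf
  rw [hend, hstart]
  field_simp

end

theorem stmt_10_general (α : ℂ) (hα : ‖α‖ < 1) (β : ℂ) (hβ : ∀ n : ℕ, β ≠ n)
    (θ : ℝ) :
    ∫ t in θ..(θ + 2 * Real.pi),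
        (Complex.exp (Complex.I * β * t) / (Complex.exp (Complex.I * t) - α)) *
          Complex.I * Complex.exp (Complex.I * t) =
    Complex.exp (Complex.I * β * θ) * (Complex.exp (2 * Real.pi * Complex.I * β) - 1) *
      ∑' k : ℕ, (α ^ k / (β - k)) * Complex.exp (-Complex.I * k * θ) := by
  rw [← (hasSum_integral_pow_mul_exp_mul_I β hα _ _).tsum_eq,
    tsum_congr fun n => integral_pow_mul_exp_mul_I_period β (hβ n) θ, tsum_mul_left]

theorem stmt_10 (α : ℂ) (hα : ‖α‖ < 1) (β : ℂ) (hβ : ∀ n : ℕ, β ≠ n)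
    (θ : ℝ) (hθ : θ ∈ Set.Ioo 0 (2 * Real.pi)) :
    ∫ t in θ..(θ + 2 * Real.pi),
        (Complex.exp (Complex.I * β * t) / (Complex.exp (Complex.I * t) - α)) *
          Complex.I * Complex.exp (Complex.I * t) =
    Complex.exp (Complex.I * β * θ) * (Complex.exp (2 * Real.pi * Complex.I * β) - 1) *
      ∑' k : ℕ, (α ^ k / (β - k)) * Complex.exp (-Complex.I * k * θ) :=
  stmt_10_general α hα β hβ θ
end
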